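/- A permutation h of F₂₇ belongs to the normalizer of G₃₅₁ in Equiv.Perm F₂₇ (i.e., h·G₃₅₁·h⁻¹ = G₃₅₁) if and only if there exist a ∈ F₂₇ with a ≠ 0, b ∈ F₂₇, and k ∈ {0, 1, 2} such that h(x) = a·x^(3^k) + b for all x ∈ F₂₇. Consequently, this normalizer has order exactly 2106. -/

import Mathlib

/-!
A permutation `h` normalizing `G₃₅₁` conjugates translations to elements of order 3 of `G₃₅₁`.
Their multipliers are nonzero squares, of order dividing 13, hence equal to 1: the conjugates
are translations again, and `h - h 0` is additive. Conjugating multiplication by a square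
shows that `φ = (h - h 0) / (h 1 - h 0)` also satisfies `φ (c² y) = φ (c²) φ y`; since every
element of a finite field is a sum of two squares, `φ` is a ring endomorphism, hence a power
of Frobenius. Conversely, conjugating `x ↦ c x + d` by `x ↦ a x^(3^k) + b` gives
`x ↦ c^(3^k) x + d'`, and `c^(3^k)` is again a square. The triples `(a, b, k)` then give
`26 · 27 · 3 = 2106` distinct permutations.
-/

/-- `F₂₇`, a finite field with 27 elements. -/
abbrev F27 : Type := GaloisField 3 3

/-- `a` is a nonzero square in `F₂₇`. -/
def IsNonzeroSquare (a : F27) : Prop := a ≠ 0 ∧ ∃ c : F27, a = c ^ 2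

/-- The set of affine permutations `x ↦ a·x + b` with `a` a nonzero square. -/
def affineSet : Set (Equiv.Perm F27) :=
  { g | ∃ a b : F27, IsNonzeroSquare a ∧ ∀ x : F27, g x = a * x + b }

namespace FiniteField

variable {K : Type*} [Field K] [Finite K]

theorem exists_sq_add_sq (x : K) : ∃ a b : K, a ^ 2 + b ^ 2 = x := by
  have := Fintype.ofFinite K
  by_cases hK : ringChar K = 2
  · obtain ⟨a, ha⟩ := isSquare_of_char_two hK x
    exact ⟨a, 0, by rw [ha]; ring⟩
  · obtain ⟨a, b, hab⟩ := exists_root_sum_quadratic (Polynomial.degree_X_pow 2)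
      (Polynomial.degree_X_pow_sub_C (by decide) x) (odd_card_of_char_ne_two hK)
    refine ⟨a, b, ?_⟩
    simp only [Polynomial.eval_pow, Polynomial.eval_X, Polynomial.eval_sub,
      Polynomial.eval_C] at hab
    linear_combination hab

theorem _root_.AddMonoidHom.map_mul_of_map_sq_mul (f : K →+ K)
    (hf : ∀ c y, f (c ^ 2 * y) = f (c ^ 2) * f y) (x y : K) : f (x * y) = f x * f y := by
  let R : AddSubgroup K :=
    { carrier := {x | ∀ y, f (x * y) = f x * f y}
      zero_mem' := fun y => by simp
      add_mem' := fun hx hz y => by simp only [add_mul, map_add, hx y, hz y]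
      neg_mem' := fun hx y => by simp only [neg_mul, map_neg, hx y] }
  obtain ⟨a, b, rfl⟩ := exists_sq_add_sq x
  exact R.add_mem (hf a) (hf b) y

theorem _root_.RingHom.exists_eq_pow_of_finite {p : ℕ} [Fact p.Prime] [Algebra (ZMod p) K]
    (f : K →+* K) : ∃ k < Module.finrank (ZMod p) K, ∀ x, f x = x ^ p ^ k := by
  let g : K →ₐ[ZMod p] K :=
    { f with commutes' := RingHom.congr_fun (Subsingleton.elim (f.comp (algebraMap _ _)) _) }
  obtain ⟨k, hk⟩ := (bijective_frobeniusAlgHom_pow (ZMod p) K).2 g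
  refine ⟨k, k.2, fun x => ?_⟩
  change g x = _
  rw [← hk, AlgHom.coe_pow, coe_frobeniusAlgHom, pow_iterate, ZMod.card]

theorem exists_eq_mul_pow_of_map_add_of_map_sq_mul {p : ℕ} [Fact p.Prime] [Algebra (ZMod p) K]
    (φ : K → K) (hadd : ∀ x y, φ (x + y) = φ x + φ y) (h1 : φ 1 ≠ 0)
    (hsq : ∀ c y, φ 1 * φ (c ^ 2 * y) = φ (c ^ 2) * φ y) :
    ∃ u ≠ 0, ∃ k < Module.finrank (ZMod p) K, ∀ x, φ x = u * x ^ p ^ k := by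
  let f : K →+ K := AddMonoidHom.mk' (fun x => (φ 1)⁻¹ * φ x) fun x y => by
    simp only [hadd, mul_add]
  have hf : ∀ x y, f (x * y) = f x * f y := f.map_mul_of_map_sq_mul fun c y => by
    simp only [f, AddMonoidHom.mk'_apply]
    field_simp
    exact hsq c y
  let F : K →+* K := { f with map_one' := inv_mul_cancel₀ h1, map_mul' := hf }
  obtain ⟨k, hk, hF⟩ := F.exists_eq_pow_of_finite (p := p)
  refine ⟨φ 1, h1, k, hk, fun x => ?_⟩
  rw [← hF x]
  exact (mul_inv_cancel_left₀ h1 (φ x)).symm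

end FiniteField

open Equiv FiniteField

theorem card_F27 : Nat.card F27 = 27 := GaloisField.card 3 3 (by norm_num)

theorem finrank_F27 : Module.finrank (ZMod 3) F27 = 3 := GaloisField.finrank 3 (by norm_num)

theorem pow_twentysix_eq_one {x : F27} (hx : x ≠ 0) : x ^ 26 = 1 := by
  have := Fintype.ofFinite F27
  have hcard : Fintype.card F27 = 27 := by
    rw [← Nat.card_eq_fintype_card, card_F27]
  simpa [hcard] using pow_card_sub_one_eq_one x hx

theorem addLeft_pow_three (b : F27) : Equiv.addLeft b ^ 3 = 1 := by
  ext x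
  have h3 : (3 : F27) = 0 := by exact_mod_cast CharP.cast_eq_zero F27 3
  simp only [Perm.coe_pow, Function.iterate_succ, Function.iterate_zero, Function.comp_apply,
    coe_addLeft, id_eq, Perm.one_apply]
  linear_combination b * h3

theorem addLeft_mem_affineSet (b : F27) : Equiv.addLeft b ∈ affineSet :=
  ⟨1, b, ⟨one_ne_zero, 1, by ring⟩, fun x => by simp [add_comm]⟩

theorem mulLeft₀_mem_affineSet {c : F27} (hc : c ≠ 0) :
    Equiv.mulLeft₀ (c ^ 2) (pow_ne_zero 2 hc) ∈ affineSet :=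
  ⟨c ^ 2, 0, ⟨pow_ne_zero 2 hc, c, rfl⟩, fun x => by simp⟩

theorem exists_eq_add_of_mem_affineSet_of_pow_three {g : Perm F27} (hg : g ∈ affineSet)
    (h3 : g ^ 3 = 1) : ∃ d, ∀ x, g x = x + d := by
  obtain ⟨_, d, ⟨he, e, rfl⟩, hg⟩ := hg
  have hcube : ∀ x, (g ^ 3) x = x := fun x => by rw [h3, Perm.one_apply]
  simp only [Perm.coe_pow, Function.iterate_succ, Function.iterate_zero, Function.comp_apply,
    id_eq, hg] at hcube
  have h6 : e ^ 6 = 1 := by linear_combination hcube 1 - hcube 0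
  have h26 : e ^ 26 = 1 := pow_twentysix_eq_one (by simpa using he)
  have h2 : e ^ 2 = 1 := by linear_combination h26 - e ^ 2 * (e ^ 18 + e ^ 12 + e ^ 6 + 1) * h6
  exact ⟨d, fun x => by rw [hg, h2, one_mul]⟩

/-- Membership in the semilinear affine group `AΓL(1, 27)`. -/
def IsSemiaffine (h : Perm F27) : Prop :=
  ∃ a b : F27, a ≠ 0 ∧ ∃ k : ℕ, k ≤ 2 ∧ ∀ x : F27, h x = a * x ^ (3 ^ k) + b

theorem conj_mem_affineSet {h g : Perm F27} (hh : IsSemiaffine h) (hg : g ∈ affineSet) :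
    h * g * h⁻¹ ∈ affineSet := by
  obtain ⟨a, b, -, k, -, hh⟩ := hh
  obtain ⟨_, d, ⟨hc, e, rfl⟩, hg⟩ := hg
  refine ⟨(e ^ 2) ^ 3 ^ k, a * d ^ 3 ^ k + b - (e ^ 2) ^ 3 ^ k * b,
    ⟨pow_ne_zero _ hc, e ^ 3 ^ k, by ring⟩, fun y => ?_⟩
  obtain ⟨z, rfl⟩ := h.surjective y
  rw [Perm.mul_apply, Perm.mul_apply, Perm.inv_def, symm_apply_apply, hg, hh, hh,
    add_pow_char_pow, mul_pow]
  ring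

theorem mem_normalizer_of_isSemiaffine {G : Subgroup (Perm F27)}
    (hG : (G : Set (Perm F27)) = affineSet) {h : Perm F27} (hh : IsSemiaffine h) :
    h ∈ Subgroup.normalizer (G : Set (Perm F27)) :=
  Subgroup.mem_normalizer_fintype fun g hg => by
    rw [hG] at hg ⊢
    exact conj_mem_affineSet hh hg

theorem map_add_eq_of_conj_mem_affineSet {h : Perm F27}
    (hconj : ∀ g ∈ affineSet, h * g * h⁻¹ ∈ affineSet)
    (b y : F27) : h (b + y) = h y + (h b - h 0) := by
  have hcube : (h * Equiv.addLeft b * h⁻¹) ^ 3 = 1 := by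
    rw [conj_pow, addLeft_pow_three, mul_one, mul_inv_cancel]
  obtain ⟨d, hd⟩ :=
    exists_eq_add_of_mem_affineSet_of_pow_three (hconj _ (addLeft_mem_affineSet b)) hcube
  have hd' : ∀ y, h (b + y) = h y + d := fun y => by simpa using hd (h y)
  rw [hd', ← add_zero b, hd' 0]
  ring

theorem map_sq_mul_eq_of_conj_mem_affineSet {h : Perm F27}
    (hconj : ∀ g ∈ affineSet, h * g * h⁻¹ ∈ affineSet)
    (c y : F27) :
    (h 1 - h 0) * (h (c ^ 2 * y) - h 0) = (h (c ^ 2) - h 0) * (h y - h 0) := by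
  rcases eq_or_ne c 0 with rfl | hc
  · simp
  obtain ⟨a, b, -, hab⟩ := hconj _ (mulLeft₀_mem_affineSet hc)
  have hab' : ∀ z, h (c ^ 2 * z) = a * h z + b := fun z => by simpa using hab (h z)
  have h0 := hab' 0
  have h1 := hab' 1
  simp only [mul_zero, mul_one] at h0 h1
  linear_combination (h 1 - h 0) * (hab' y - h0) - (h y - h 0) * (h1 - h0)

theorem isSemiaffine_of_conj_mem_affineSet {h : Perm F27}
    (hconj : ∀ g ∈ affineSet, h * g * h⁻¹ ∈ affineSet) :
    IsSemiaffine h := by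
  obtain ⟨u, hu, k, hk, hφ⟩ := exists_eq_mul_pow_of_map_add_of_map_sq_mul (p := 3)
    (fun x => h x - h 0) (fun x y => by simp only [map_add_eq_of_conj_mem_affineSet hconj]; ring)
    (sub_ne_zero.mpr (h.injective.ne one_ne_zero)) (map_sq_mul_eq_of_conj_mem_affineSet hconj)
  rw [finrank_F27] at hk
  exact ⟨u, h 0, hu, k, by omega, fun x => by linear_combination hφ x⟩

theorem isSemiaffine_of_mem_normalizer {G : Subgroup (Perm F27)}
    (hG : (G : Set (Perm F27)) = affineSet) {h : Perm F27}
    (hh : h ∈ Subgroup.normalizer (G : Set (Perm F27))) : IsSemiaffine h :=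
  isSemiaffine_of_conj_mem_affineSet fun g hg => by
    rw [← hG] at hg ⊢
    exact (Subgroup.mem_normalizer_iff.mp hh g).mp hg

theorem frobenius_pow_apply (k : ℕ) (x : F27) :
    (frobeniusAlgEquivOfAlgebraic (ZMod 3) F27 ^ k) x = x ^ 3 ^ k := by
  rw [AlgEquiv.coe_pow, coe_frobeniusAlgEquivOfAlgebraic_iterate, ZMod.card]

noncomputable def semiaffinePerm (a : F27ˣ) (b : F27) (k : ℕ) : Perm F27 :=
  ((frobeniusAlgEquivOfAlgebraic (ZMod 3) F27 ^ k).toEquiv.trans (Units.mulLeft a)).trans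
    (Equiv.addRight b)

theorem semiaffinePerm_apply (a : F27ˣ) (b : F27) (k : ℕ) (x : F27) :
    semiaffinePerm a b k x = a * x ^ 3 ^ k + b := by
  simp [semiaffinePerm, frobenius_pow_apply]

theorem semiaffinePerm_injective :
    Function.Injective fun t : F27ˣ × F27 × Fin 3 => semiaffinePerm t.1 t.2.1 t.2.2 := by
  rintro ⟨a, b, k⟩ ⟨a', b', k'⟩ h
  have hx : ∀ x, semiaffinePerm a b k x = semiaffinePerm a' b' k' x := fun x => congr($h x)
  simp only [semiaffinePerm_apply] at hx
  have hb : b = b' := by simpa using hx 0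
  have ha : a = a' := Units.ext (by simpa [hb] using hx 1)
  subst hb ha
  have hfrob : frobeniusAlgEquivOfAlgebraic (ZMod 3) F27 ^ (k : ℕ) =
      frobeniusAlgEquivOfAlgebraic (ZMod 3) F27 ^ (k' : ℕ) :=
    AlgEquiv.ext fun x => by simpa [frobenius_pow_apply] using hx x
  have horder : orderOf (frobeniusAlgEquivOfAlgebraic (ZMod 3) F27) = 3 := by
    rw [orderOf_frobeniusAlgEquivOfAlgebraic, finrank_F27]
  have hk : (k : ℕ) = k' := pow_injOn_Iio_orderOf (by simp [horder]) (by simp [horder]) hfrob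
  rw [Fin.ext hk]

theorem range_semiaffinePerm :
    Set.range (fun t : F27ˣ × F27 × Fin 3 => semiaffinePerm t.1 t.2.1 t.2.2) =
      {h | IsSemiaffine h} := by
  ext h
  constructor
  · rintro ⟨⟨a, b, k⟩, rfl⟩
    exact ⟨a, b, a.ne_zero, k, by omega, semiaffinePerm_apply a b k⟩
  · rintro ⟨a, b, ha, k, hk, hh⟩
    exact ⟨⟨Units.mk0 a ha, b, ⟨k, by omega⟩⟩,
      Equiv.ext fun x => by simp [semiaffinePerm_apply, hh]⟩

/-- A permutation of `F₂₇` belongs to the normalizer of `G₃₅₁` in `Equiv.Perm F₂₇` if and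
only if it has the form `x ↦ a·x^(3^k) + b` with `a ≠ 0`, `b ∈ F₂₇` and `k ∈ {0, 1, 2}`;
consequently the normalizer has order 2106. -/
theorem statement9 (G : Subgroup (Equiv.Perm F27))
    (hG : (G : Set (Equiv.Perm F27)) = affineSet) :
    (∀ h : Equiv.Perm F27, h ∈ Subgroup.normalizer (G : Set (Equiv.Perm F27)) ↔
      ∃ a b : F27, a ≠ 0 ∧ ∃ k : ℕ, k ≤ 2 ∧ ∀ x : F27, h x = a * x ^ (3 ^ k) + b) ∧
    Nat.card (Subgroup.normalizer (G : Set (Equiv.Perm F27))) = 2106 := by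
  have hmem : ∀ h, h ∈ Subgroup.normalizer (G : Set (Perm F27)) ↔ IsSemiaffine h :=
    fun h => ⟨isSemiaffine_of_mem_normalizer hG, mem_normalizer_of_isSemiaffine hG⟩
  refine ⟨hmem, ?_⟩
  calc Nat.card (Subgroup.normalizer (G : Set (Perm F27)))
      = Nat.card {h | IsSemiaffine h} := Nat.card_congr (Equiv.subtypeEquivRight hmem)
    _ = Nat.card (F27ˣ × F27 × Fin 3) := by
      rw [← range_semiaffinePerm, Nat.card_range_of_injective semiaffinePerm_injective]
    _ = 2106 := by
      simp [Nat.card_prod, Nat.card_units, card_F27]
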